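/- If G is a well-covered finite simple graph with ω(G) ≤ α(G) = 3, then the coefficient sequence of its independence polynomial I(G;x) = s₀ + s₁x + s₂x² + s₃x³ is log-concave, i.e., s₁² ≥ s₀s₂ and s₂² ≥ s₁s₃. -/

import Mathlib

open Classical in
/-- The set of stable (independent) sets of a graph, as finsets. -/
noncomputable def stableSets {V : Type*} [Fintype V] (G : SimpleGraph V) : Finset (Finset V) :=
  Finset.univ.filter (fun s : Finset V => ∀ v ∈ s, ∀ w ∈ s, ¬ G.Adj v w)

/-- The independence number: the maximum size of a stable set. -/
noncomputable def indepNum {V : Type*} [Fintype V] (G : SimpleGraph V) : ℕ :=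
  (stableSets G).sup Finset.card

open Classical in
/-- `sCount G k` is the number of stable sets of cardinality `k` in `G`. -/
noncomputable def sCount {V : Type*} [Fintype V] (G : SimpleGraph V) (k : ℕ) : ℕ :=
  ((stableSets G).filter (fun s => s.card = k)).card

/-- The clique number: the independence number of the complement. -/
noncomputable def cliqueNum {V : Type*} [Fintype V] (G : SimpleGraph V) : ℕ :=
  indepNum Gᶜ

/-- A graph is well-covered if every maximal stable set is a maximum stable set. -/
def WellCovered {V : Type*} [Fintype V] (G : SimpleGraph V) : Prop :=
  ∀ s ∈ stableSets G, (∀ t ∈ stableSets G, s ⊆ t → s = t) → s.card = indepNum G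

/-! Double count the pairs `s ⊆ t` of stable sets with `#s = k` and `#t = k + 1`: each `t` lies
above `k + 1` such `s`, and each `s` lies below as many `t` as it has one-vertex stable
extensions. In a well-covered graph every stable set extends to a maximum one, so a stable
`k`-set has at least `α - k` extensions; for `α = 3, k = 1` this gives `s₁ ≤ s₂`. The extensions
of a stable `(α - 1)`-set are pairwise adjacent, so there are at most `ω ≤ α` of them, giving
`s₃ ≤ s₂`. With `s₀ = 1` and `s₂ ≤ C(n, 2) ≤ n² = s₁²` this is log-concavity. -/

open Finset

section

variable {V : Type*} [Fintype V] {G : SimpleGraph V}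

theorem mem_stableSets {s : Finset V} : s ∈ stableSets G ↔ G.IsIndepSet (s : Set V) := by
  simp only [stableSets, mem_filter, mem_univ, true_and, SimpleGraph.isIndepSet_iff,
    Set.Pairwise, mem_coe]
  exact ⟨fun h v hv w hw _ => h v hv w hw,
    fun h v hv w hw => by_cases (fun hvw : v = w => hvw ▸ G.irrefl) (h hv hw)⟩

theorem mem_stableSets_of_subset {s t : Finset V} (ht : t ∈ stableSets G) (hst : s ⊆ t) :
    s ∈ stableSets G :=
  mem_stableSets.2 <| (mem_stableSets.1 ht).mono (coe_subset.2 hst)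

theorem card_le_indepNum {s : Finset V} (hs : s ∈ stableSets G) : #s ≤ indepNum G :=
  le_sup hs

theorem sCount_zero : sCount G 0 = 1 := by
  classical
  rw [sCount, card_eq_one]
  refine ⟨∅, ext fun s => ?_⟩
  simp only [mem_filter, card_eq_zero, mem_singleton]
  exact ⟨And.right, fun h => ⟨h ▸ mem_stableSets.2 (by simp), h⟩⟩

theorem sCount_one : sCount G 1 = Fintype.card V := by
  classical
  rw [sCount, ← Nat.choose_one_right (Fintype.card V), ← card_univ, ← card_powersetCard]
  congr 1
  ext s
  simp only [mem_filter, mem_powersetCard, subset_univ, true_and, and_iff_right_iff_imp,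
    card_eq_one]
  rintro ⟨v, rfl⟩
  exact mem_stableSets.2 (by simp)

theorem sCount_le_choose (k : ℕ) : sCount G k ≤ (Fintype.card V).choose k := by
  classical
  rw [sCount, ← card_univ, ← card_powersetCard]
  exact card_le_card fun s hs => mem_powersetCard.2 ⟨subset_univ s, (mem_filter.1 hs).2⟩

theorem WellCovered.exists_superset_card_eq_indepNum (hwc : WellCovered G) {s : Finset V}
    (hs : s ∈ stableSets G) : ∃ t ∈ stableSets G, s ⊆ t ∧ #t = indepNum G := by
  classical
  obtain ⟨t, ht, htmax⟩ :=
    ((stableSets G).filter (s ⊆ ·)).exists_maximal ⟨s, mem_filter.2 ⟨hs, subset_rfl⟩⟩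
  rw [mem_filter] at ht
  refine ⟨t, ht.1, ht.2, hwc t ht.1 fun u hu htu => ?_⟩
  exact le_antisymm htu (htmax (mem_filter.2 ⟨hu, ht.2.trans htu⟩) htu)

noncomputable def stableExtensions [DecidableEq V] (G : SimpleGraph V) (s : Finset V) : Finset V :=
  univ.filter fun v => v ∉ s ∧ insert v s ∈ stableSets G

theorem card_stableExtensions [DecidableEq V] (s : Finset V) :
    #(stableExtensions G s) = #((stableSets G).filter fun t => #t = #s + 1 ∧ s ⊆ t) := by
  refine card_bij (fun v _ => insert v s) (fun v hv => ?_) (fun v hv w _ hvw => ?_) fun t ht => ?_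
  · simp only [stableExtensions, mem_filter, mem_univ, true_and] at hv ⊢
    exact ⟨hv.2, card_insert_of_notMem hv.1, subset_insert v s⟩
  · simp only [stableExtensions, mem_filter] at hv
    exact (insert_inj hv.2.1).1 hvw
  · obtain ⟨hstable, hcard, hst⟩ := by simpa only [mem_filter] using ht
    obtain ⟨v, hv, rfl⟩ := exists_eq_insert_iff.2 ⟨hst, hcard.symm⟩
    exact ⟨v, by simpa [stableExtensions, hv] using hstable, rfl⟩

theorem sum_card_stableExtensions [DecidableEq V] (k : ℕ) :
    ∑ s ∈ (stableSets G).filter (#· = k), #(stableExtensions G s) =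
      (k + 1) * sCount G (k + 1) := by
  have h_above : ∀ s ∈ (stableSets G).filter (#· = k), #(stableExtensions G s) =
      #(((stableSets G).filter (#· = k + 1)).bipartiteAbove (· ⊆ ·) s) := by
    intro s hs
    rw [card_stableExtensions, bipartiteAbove, filter_filter, (mem_filter.1 hs).2]
  have h_below : ∀ t ∈ (stableSets G).filter (#· = k + 1),
      #(((stableSets G).filter (#· = k)).bipartiteBelow (· ⊆ ·) t) = k + 1 := by
    intro t ht
    obtain ⟨htstable, htcard⟩ := mem_filter.1 ht
    have : ((stableSets G).filter (#· = k)).bipartiteBelow (· ⊆ ·) t = t.powersetCard k := by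
      ext s
      simp only [mem_bipartiteBelow, mem_filter, mem_powersetCard]
      exact ⟨fun h => ⟨h.2, h.1.2⟩,
        fun h => ⟨⟨mem_stableSets_of_subset htstable h.1, h.2⟩, h.1⟩⟩
    rw [this, card_powersetCard, htcard, Nat.choose_succ_self_right]
  rw [sum_congr rfl h_above, sum_card_bipartiteAbove_eq_sum_card_bipartiteBelow,
    sum_const_nat h_below, sCount, mul_comm]

theorem WellCovered.indepNum_sub_card_le_card_stableExtensions [DecidableEq V]
    (hwc : WellCovered G) {s : Finset V} (hs : s ∈ stableSets G) :
    indepNum G - #s ≤ #(stableExtensions G s) := by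
  obtain ⟨t, ht, hst, htα⟩ := hwc.exists_superset_card_eq_indepNum hs
  rw [← htα, ← card_sdiff_of_subset hst]
  refine card_le_card fun v hv => ?_
  rw [mem_sdiff] at hv
  simp only [stableExtensions, mem_filter, mem_univ, true_and]
  exact ⟨hv.2, mem_stableSets_of_subset ht (insert_subset hv.1 hst)⟩

-- Two non-adjacent extensions of `s` would together extend it to a stable set of size `#s + 2`.
theorem card_stableExtensions_le_cliqueNum [DecidableEq V] {s : Finset V}
    (hs : indepNum G ≤ #s + 1) : #(stableExtensions G s) ≤ cliqueNum G := by
  refine card_le_indepNum (mem_stableSets.2 ((G.isIndepSet_compl).2 ?_))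
  intro v hv w hw hvw
  by_contra hnadj
  simp only [stableExtensions, mem_coe, mem_filter, mem_univ, true_and] at hv hw
  have hstable : insert v (insert w s) ∈ stableSets G := by
    have hvs : Gᶜ.IsClique (insert v (s : Set V)) := by
      simpa using mem_stableSets.1 hv.2
    rw [mem_stableSets, ← G.isClique_compl, coe_insert, coe_insert, SimpleGraph.isClique_insert]
    refine ⟨by simpa using mem_stableSets.1 hw.2, fun u hu hvu => ?_⟩
    rcases hu with rfl | hu
    · exact (G.compl_adj v u).2 ⟨hvw, hnadj⟩
    · exact (SimpleGraph.isClique_insert.1 hvs).2 u hu hvu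
  have hcard : #(insert v (insert w s)) = #s + 2 := by
    rw [card_insert_of_notMem (by simp [hvw, hv.1]), card_insert_of_notMem hw.1]
  have := card_le_indepNum hstable
  omega

theorem WellCovered.indepNum_sub_mul_sCount_le (hwc : WellCovered G) (k : ℕ) :
    (indepNum G - k) * sCount G k ≤ (k + 1) * sCount G (k + 1) := by
  classical
  rw [← sum_card_stableExtensions, mul_comm, sCount, ← smul_eq_mul]
  refine card_nsmul_le_sum _ _ _ fun s hs => ?_
  obtain ⟨hstable, rfl⟩ := mem_filter.1 hs
  exact hwc.indepNum_sub_card_le_card_stableExtensions hstable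

theorem succ_mul_sCount_le_cliqueNum_mul {k : ℕ} (hk : indepNum G ≤ k + 1) :
    (k + 1) * sCount G (k + 1) ≤ cliqueNum G * sCount G k := by
  classical
  rw [← sum_card_stableExtensions, mul_comm, sCount, ← smul_eq_mul]
  refine sum_le_card_nsmul _ _ _ fun s hs => ?_
  obtain ⟨-, rfl⟩ := mem_filter.1 hs
  exact card_stableExtensions_le_cliqueNum hk

end

/-- If `G` is well-covered with `ω(G) ≤ α(G) = 3`, then the coefficient sequence
`(s₀, s₁, s₂, s₃)` of its independence polynomial is log-concave. -/
theorem wellCovered_alpha_three_logConcave {V : Type*} [Fintype V] (G : SimpleGraph V)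
    (hwc : WellCovered G) (hω : cliqueNum G ≤ indepNum G) (hα : indepNum G = 3) :
    sCount G 0 * sCount G 2 ≤ sCount G 1 ^ 2 ∧
      sCount G 1 * sCount G 3 ≤ sCount G 2 ^ 2 := by
  have hs12 : sCount G 1 ≤ sCount G 2 := by
    have h := hwc.indepNum_sub_mul_sCount_le 1
    rw [hα] at h
    exact Nat.le_of_mul_le_mul_left h two_pos
  have hs32 : sCount G 3 ≤ sCount G 2 := by
    have h := succ_mul_sCount_le_cliqueNum_mul (k := 2) hα.le
    exact Nat.le_of_mul_le_mul_left (h.trans (Nat.mul_le_mul_right _ (hω.trans hα.le))) three_pos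
  refine ⟨?_, ?_⟩
  · rw [sCount_zero, sCount_one, one_mul]
    exact (sCount_le_choose 2).trans (Nat.choose_le_pow _ _)
  · calc sCount G 1 * sCount G 3 ≤ sCount G 2 * sCount G 2 := Nat.mul_le_mul hs12 hs32
      _ = sCount G 2 ^ 2 := (sq _).symm
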